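/- arXiv:2106.12010 — 4 statements merged into one kernel-verified Lean document; each statement's English description precedes it below -/
import Mathlib

section
/- Let H be a real inner product space, let a < b ≤ c be real numbers, and let χ_{a,b} be the linear cutoff function associated to [a,b]. Let u : ℝ → H and u' : ℝ → H be functions such that u has derivative u'(t) at every t ∈ [a,c] and u' is continuous on [a,c]. Then ∫_a^c χ_{a,b}(t) ⟪u'(t), u(t)⟫ dt = (1/2)‖u(c)‖² − (1/(2(b−a))) ∫_a^b ‖u(t)‖² dt. (This is the integration-by-parts identity used in Step 1 of Lemma 4.5 of the paper, with a = t_{n−k}, b = t_{n−k+1}, c = t_{n+1}.) -/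
open Classical in
/-- The linear cutoff function `χ_{a,b}` associated to the interval `[a,b]`:
`0` for `t ≤ a`, `(t-a)/(b-a)` for `a ≤ t ≤ b`, and `1` for `t ≥ b`. -/
noncomputable def linearCutoff (a b t : ℝ) : ℝ :=
  if t ≤ a then 0 else if t ≤ b then (t - a) / (b - a) else 1

/-!
On `[b, c]` the cutoff is `1`, so that part of the integral is `f c - f b` for `f = ‖u‖² / 2`,
whose derivative is `⟪u', u⟫`. On `[a, b]` the cutoff is `(t - a) / (b - a)`, and integrating by
parts gives `f b - (b - a)⁻¹ ∫_a^b f`; the two `f b` cancel.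
-/

open Set MeasureTheory
open scoped Interval

section LinearCutoff

variable {a b : ℝ}

theorem linearCutoff_eq_max_min (hab : a < b) (t : ℝ) :
    linearCutoff a b t = max 0 (min ((t - a) / (b - a)) 1) := by
  have hba : 0 < b - a := sub_pos.mpr hab
  unfold linearCutoff
  split_ifs with hta htb
  · have : (t - a) / (b - a) ≤ 0 := div_nonpos_of_nonpos_of_nonneg (by linarith) hba.le
    simp [this]
  · have h0 : 0 ≤ (t - a) / (b - a) := div_nonneg (by linarith) hba.le
    have h1 : (t - a) / (b - a) ≤ 1 := (div_le_one hba).mpr (by linarith)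
    simp [h0, h1]
  · have : 1 ≤ (t - a) / (b - a) := (one_le_div hba).mpr (by linarith)
    simp [this]

theorem continuous_linearCutoff (hab : a < b) : Continuous (linearCutoff a b) := by
  rw [funext (linearCutoff_eq_max_min hab)]
  fun_prop

theorem linearCutoff_eqOn_Icc :
    EqOn (linearCutoff a b) (fun t => (t - a) / (b - a)) (Icc a b) := by
  rintro t ⟨hat, htb⟩
  rcases hat.eq_or_lt with rfl | hat
  · simp [linearCutoff]
  · simp [linearCutoff, hat.not_ge, htb]

theorem linearCutoff_eqOn_Ici (hab : a < b) : EqOn (linearCutoff a b) 1 (Ici b) := by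
  intro t (hbt : b ≤ t)
  rcases hbt.eq_or_lt with rfl | hbt
  · simp [linearCutoff, hab.not_ge, div_self (sub_pos.mpr hab).ne']
  · simp [linearCutoff, (hab.trans hbt).not_ge, hbt.not_ge]

end LinearCutoff

theorem integral_linearCutoff_mul_deriv {a b c : ℝ} (hab : a < b) (hbc : b ≤ c) {f g : ℝ → ℝ}
    (hf : ∀ t ∈ Icc a c, HasDerivAt f (g t) t) (hg : IntervalIntegrable g volume a c) :
    ∫ t in a..c, linearCutoff a b t * g t = f c - (∫ t in a..b, f t) / (b - a) := by
  have hac : a ≤ c := hab.le.trans hbc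
  have hsub_ab : [[a, b]] ⊆ [[a, c]] := by
    rw [uIcc_of_le hab.le, uIcc_of_le hac]; exact Icc_subset_Icc_right hbc
  have hsub_bc : [[b, c]] ⊆ [[a, c]] := by
    rw [uIcc_of_le hbc, uIcc_of_le hac]; exact Icc_subset_Icc_left hab.le
  have hf_ac : ∀ t ∈ [[a, c]], HasDerivAt f (g t) t := by rwa [uIcc_of_le hac]
  have hχg : IntervalIntegrable (fun t => linearCutoff a b t * g t) volume a c :=
    hg.continuousOn_mul (continuous_linearCutoff hab).continuousOn
  have h_bc : ∫ t in b..c, linearCutoff a b t * g t = f c - f b := by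
    have hχ : EqOn (fun t => linearCutoff a b t * g t) g [[b, c]] := fun t ht => by
      rw [uIcc_of_le hbc] at ht
      simp [linearCutoff_eqOn_Ici hab ht.1]
    rw [intervalIntegral.integral_congr hχ]
    exact intervalIntegral.integral_eq_sub_of_hasDerivAt (fun t ht => hf_ac t (hsub_bc ht))
      (hg.mono_set hsub_bc)
  have h_ab : ∫ t in a..b, linearCutoff a b t * g t = f b - (∫ t in a..b, f t) / (b - a) := by
    have hχ : EqOn (fun t => linearCutoff a b t * g t) (fun t => (t - a) / (b - a) * g t)
        [[a, b]] := fun t ht => by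
      rw [uIcc_of_le hab.le] at ht
      simp [linearCutoff_eqOn_Icc ht]
    have hu : ∀ t ∈ [[a, b]], HasDerivAt (fun t => (t - a) / (b - a)) (1 / (b - a)) t :=
      fun t _ => by simpa using ((hasDerivAt_id t).sub_const a).div_const (b - a)
    rw [intervalIntegral.integral_congr hχ,
      intervalIntegral.integral_mul_deriv_eq_deriv_mul hu (fun t ht => hf_ac t (hsub_ab ht))
        intervalIntegrable_const (hg.mono_set hsub_ab),
      intervalIntegral.integral_const_mul, div_self (sub_pos.mpr hab).ne']
    ring
  rw [← intervalIntegral.integral_add_adjacent_intervals (hχg.mono_set hsub_ab)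
    (hχg.mono_set hsub_bc), h_ab, h_bc]
  ring

/-- integration-by-parts identity with the linear cutoff `χ_{a,b}`:
`∫_a^c χ_{a,b}(t) ⟪u'(t), u(t)⟫ dt = (1/2)‖u(c)‖² − (1/(2(b−a))) ∫_a^b ‖u(t)‖² dt`. -/
theorem stmt1 {H : Type*} [NormedAddCommGroup H] [InnerProductSpace ℝ H]
    {a b c : ℝ} (hab : a < b) (hbc : b ≤ c) (u u' : ℝ → H)
    (hderiv : ∀ t ∈ Set.Icc a c, HasDerivAt u (u' t) t)
    (hcont : ContinuousOn u' (Set.Icc a c)) :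
    (∫ t in a..c, linearCutoff a b t * (inner ℝ (u' t) (u t) : ℝ)) =
      (1 / 2) * ‖u c‖ ^ 2 - (1 / (2 * (b - a))) * ∫ t in a..b, ‖u t‖ ^ 2 := by
  have hu : ContinuousOn u (Icc a c) := fun t ht => (hderiv t ht).continuousAt.continuousWithinAt
  have h_half_norm_sq : ∀ t ∈ Icc a c,
      HasDerivAt (fun s => ‖u s‖ ^ 2 / 2) (inner ℝ (u' t) (u t)) t := fun t ht => by
    simpa [real_inner_comm] using ((hderiv t ht).norm_sq).div_const 2
  have h_inner : IntervalIntegrable (fun t => inner ℝ (u' t) (u t)) volume a c :=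
    (hcont.inner hu).intervalIntegrable_of_Icc (hab.le.trans hbc)
  rw [integral_linearCutoff_mul_deriv hab hbc h_half_norm_sq h_inner,
    intervalIntegral.integral_div]
  field_simp
end

section
/- Let H be a real inner product space, let a < b be real numbers, and let u : ℝ → H and u' : ℝ → H be functions such that u has derivative u'(t) at every t ∈ [a,b] and u' is continuous on [a,b]. Then (1/2)‖u(a)‖² ≤ (1/(b−a)) ∫_a^b ‖u(t)‖² dt + ∫_a^b ‖u'(t)‖ ‖u(t)‖ dt. (This is the trace-type estimate established in Step 3 of the proof of Lemma 4.5 of the paper, controlling the value of a function at the left endpoint of a time interval by its L² norm and the product of the L² norms of the function and its time derivative over that interval.) -/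
/-!
Since `d/dt ‖u‖² = 2⟪u, u'⟫ ≥ -2‖u'‖‖u‖`, one has `‖u a‖² ≤ ‖u s‖² + 2 ∫_a^b ‖u'‖‖u‖` for every
`s ∈ [a, b]`. Averaging over `s` gives `‖u a‖² ≤ (b - a)⁻¹ ∫_a^b ‖u‖² + 2 ∫_a^b ‖u'‖‖u‖`.
-/

open MeasureTheory Set

section

variable {H : Type*} [NormedAddCommGroup H] [InnerProductSpace ℝ H]

theorem sq_norm_sub_sq_norm_le_two_mul_integral {u u' : ℝ → H} {a b : ℝ} (hab : a ≤ b)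
    (hu : ContinuousOn u (Icc a b)) (hderiv : ∀ t ∈ Ioo a b, HasDerivAt u (u' t) t)
    (hint : IntegrableOn (fun t => ‖u' t‖ * ‖u t‖) (Icc a b)) :
    ‖u a‖ ^ 2 - ‖u b‖ ^ 2 ≤ 2 * ∫ t in a..b, ‖u' t‖ * ‖u t‖ := by
  -- Only an integrable upper bound of the derivative `-2⟪u, u'⟫` is needed, not its integrability.
  have hftc := intervalIntegral.sub_le_integral_of_hasDeriv_right_of_le
    (g := fun t => -‖u t‖ ^ 2) hab (hu.norm.pow 2).neg
    (fun t ht => (hderiv t ht).norm_sq.neg.hasDerivWithinAt) (hint.const_mul 2)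
    (fun t _ => by
      have := neg_le_of_abs_le (abs_real_inner_le_norm (u t) (u' t))
      linarith [mul_comm ‖u t‖ ‖u' t‖])
  rw [intervalIntegral.integral_const_mul] at hftc
  linarith

theorem sq_norm_le_sq_norm_add_two_mul_integral {u u' : ℝ → H} {a b s : ℝ}
    (hs : s ∈ Icc a b) (hu : ContinuousOn u (Icc a b))
    (hderiv : ∀ t ∈ Ioo a b, HasDerivAt u (u' t) t)
    (hint : IntegrableOn (fun t => ‖u' t‖ * ‖u t‖) (Icc a b)) :
    ‖u a‖ ^ 2 ≤ ‖u s‖ ^ 2 + 2 * ∫ t in a..b, ‖u' t‖ * ‖u t‖ := by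
  have hsub : Icc a s ⊆ Icc a b := Icc_subset_Icc_right hs.2
  have hle := sq_norm_sub_sq_norm_le_two_mul_integral hs.1 (hu.mono hsub)
    (fun t ht => hderiv t ⟨ht.1, ht.2.trans_le hs.2⟩) (hint.mono_set hsub)
  have hmono : ∫ t in a..s, ‖u' t‖ * ‖u t‖ ≤ ∫ t in a..b, ‖u' t‖ * ‖u t‖ :=
    intervalIntegral.integral_mono_interval le_rfl hs.1 hs.2
      (Filter.Eventually.of_forall fun t => by positivity)
      ((intervalIntegrable_iff_integrableOn_Icc_of_le (hs.1.trans hs.2)).2 hint)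
  linarith

end

theorem mul_le_integral_of_forall_le {f : ℝ → ℝ} {a b c : ℝ} (hab : a ≤ b)
    (hf : IntervalIntegrable f volume a b) (h : ∀ s ∈ Icc a b, c ≤ f s) :
    (b - a) * c ≤ ∫ s in a..b, f s := by
  simpa using intervalIntegral.integral_mono_on hab intervalIntegrable_const hf h

/-- trace-type estimate
`(1/2)‖u(a)‖² ≤ (1/(b−a)) ∫_a^b ‖u(t)‖² dt + ∫_a^b ‖u'(t)‖ ‖u(t)‖ dt`. -/
theorem stmt3 {H : Type*} [NormedAddCommGroup H] [InnerProductSpace ℝ H]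
    {a b : ℝ} (hab : a < b) (u u' : ℝ → H)
    (hderiv : ∀ t ∈ Set.Icc a b, HasDerivAt u (u' t) t)
    (hcont : ContinuousOn u' (Set.Icc a b)) :
    (1 / 2) * ‖u a‖ ^ 2 ≤
      (1 / (b - a)) * (∫ t in a..b, ‖u t‖ ^ 2) + ∫ t in a..b, ‖u' t‖ * ‖u t‖ := by
  have hu : ContinuousOn u (Icc a b) := fun t ht => (hderiv t ht).continuousAt.continuousWithinAt
  have hint : IntegrableOn (fun t => ‖u' t‖ * ‖u t‖) (Icc a b) :=
    (hcont.norm.mul hu.norm).integrableOn_Icc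
  have hsq : IntervalIntegrable (fun t => ‖u t‖ ^ 2) volume a b :=
    (hu.norm.pow 2).intervalIntegrable_of_Icc hab.le
  have hJ : 0 ≤ ∫ t in a..b, ‖u t‖ ^ 2 :=
    intervalIntegral.integral_nonneg hab.le fun t _ => sq_nonneg _
  have havg := mul_le_integral_of_forall_le hab.le hsq
    fun s hs => sub_le_iff_le_add.2 <| sq_norm_le_sq_norm_add_two_mul_integral hs hu
      (fun t ht => hderiv t (Ioo_subset_Icc_self ht)) hint
  have hba : 0 < b - a := sub_pos.2 hab
  have hdiv : ‖u a‖ ^ 2 - 2 * (∫ t in a..b, ‖u' t‖ * ‖u t‖) ≤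
      (1 / (b - a)) * ∫ t in a..b, ‖u t‖ ^ 2 := by
    rw [one_div_mul_eq_div]
    exact (le_div_iff₀' hba).2 havg
  linarith [mul_nonneg (one_div_nonneg.2 hba.le) hJ]
end

section
/- Let X be a real vector space equipped with bilinear forms a, e, s, b : X × X → ℝ such that: a, e and s are positive semidefinite symmetric bilinear forms; b satisfies b(w,w) ≥ 0 for all w ∈ X. Write q_s(x) := s(x,x)^{1/2}, q_e(x) := e(x,x)^{1/2}, and define the energy seminorm ‖v‖_V := (a(v,v) + e(v,v))^{1/2}. Let π : X → X be a linear map that is s-orthogonal, i.e. s(x − π(x), π(y)) = 0 for all x, y ∈ X, and suppose there is a constant C ≥ 0 with q_s(x − π(x)) ≤ C ‖x‖_V for all x ∈ X. Suppose u, u_glo, f̃ ∈ X satisfy: b(u,v) + a(u,v) = s(f̃, v) for all v ∈ X, and b(u_glo, v) + a(u_glo, v) + e(u_glo, v) = s(π(f̃), v) for all v ∈ X. Then ‖u − u_glo‖_V ≤ C q_s(f̃) + q_e(u). (This is the abstract form of Theorem 4.3 of the paper, the error bound ‖u − u_glo‖_V ≤ C₀(1 + (Δt/H²)^{1/2}) ‖κ̃^{−1/2}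 f‖_{L²} + ‖κ̃^{−1/2} ∂_t u‖_{L²} for the global space-time NLMC solution, where s is the κ̃-weighted L² inner product, π the s-orthogonal projection onto the auxiliary space, f̃ = f/κ̃, and C the projection approximation constant.) -/
/-!
Put `w = u - u_glo`. Subtracting the two variational equations tested with `w` and dropping
`b(w,w) ≥ 0` gives `‖w‖_V² ≤ s(f̃ - πf̃, w) + e(u, w)`. By s-orthogonality the first term equals
`s(f̃ - πf̃, w - πw)`, so Cauchy–Schwarz, `q_s(f̃ - πf̃) ≤ q_s(f̃)` and the approximation property
bound it by `C q_s(f̃) ‖w‖_V`; Cauchy–Schwarz bounds the second by `q_e(u) ‖w‖_V`. Divide by `‖w‖_V`.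
-/

namespace LinearMap.BilinForm

variable {X : Type*} [AddCommGroup X] [Module ℝ X]

lemma apply_le_sqrt_mul_sqrt (B : LinearMap.BilinForm ℝ X) (hB : ∀ x, 0 ≤ B x x)
    (hsymm : B.IsSymm) (x y : X) : B x y ≤ √(B x x) * √(B y y) := by
  rw [← Real.sqrt_mul (hB x)]
  exact Real.le_sqrt_of_sq_le (apply_sq_le_of_symm B hB (isSymm_iff.mp hsymm) x y)

lemma apply_self_sub_map_le_apply_self (s : LinearMap.BilinForm ℝ X) (hs : ∀ x, 0 ≤ s x x)
    (hsymm : s.IsSymm) (π : X →ₗ[ℝ] X) (hπ : ∀ x y, s (x - π x) (π y) = 0) (x : X) :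
    s (x - π x) (x - π x) ≤ s x x := by
  have hx : s x (π x) = s (π x) (π x) := by
    simpa [sub_eq_zero, LinearMap.sub_apply] using hπ x x
  have hpyth : s (x - π x) (x - π x) = s x x - s (π x) (π x) := by
    simp only [map_sub, LinearMap.sub_apply, hsymm.eq (π x) x, hx]
    ring
  linarith [hs (π x)]

lemma apply_sub_map_eq_apply_sub_map (s : LinearMap.BilinForm ℝ X) (π : X →ₗ[ℝ] X)
    (hπ : ∀ x y, s (x - π x) (π y) = 0) (x y : X) :
    s (x - π x) y = s (x - π x) (y - π y) := by
  rw [(s (x - π x)).map_sub, hπ, sub_zero]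

lemma error_equation (a e s b : LinearMap.BilinForm ℝ X) {u ug f g : X}
    (hu : ∀ v, b u v + a u v = s f v) (hug : ∀ v, b ug v + a ug v + e ug v = s g v) (v : X) :
    b (u - ug) v + a (u - ug) v + e (u - ug) v = s (f - g) v + e u v := by
  simp only [map_sub, LinearMap.sub_apply]
  linarith [hu v, hug v]

end LinearMap.BilinForm

open LinearMap.BilinForm in
theorem stmt6_general {X : Type*} [AddCommGroup X] [Module ℝ X]
    (a e s b : LinearMap.BilinForm ℝ X)
    (ha_pos : ∀ x, 0 ≤ a x x)
    (he_symm : ∀ x y, e x y = e y x) (he_pos : ∀ x, 0 ≤ e x x)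
    (hs_symm : ∀ x y, s x y = s y x) (hs_pos : ∀ x, 0 ≤ s x x)
    (hb_pos : ∀ w, 0 ≤ b w w)
    (π : X →ₗ[ℝ] X)
    (hπ : ∀ x y, s (x - π x) (π y) = 0)
    (C : ℝ) (hC : 0 ≤ C)
    (happrox : ∀ x, Real.sqrt (s (x - π x) (x - π x)) ≤ C * Real.sqrt (a x x + e x x))
    (u uglo ftil : X)
    (hu : ∀ v, b u v + a u v = s ftil v)
    (huglo : ∀ v, b uglo v + a uglo v + e uglo v = s (π ftil) v) :
    Real.sqrt (a (u - uglo) (u - uglo) + e (u - uglo) (u - uglo)) ≤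
      C * Real.sqrt (s ftil ftil) + Real.sqrt (e u u) := by
  set w := u - uglo
  set N := √(a w w + e w w)
  have hN : N ^ 2 = a w w + e w w := Real.sq_sqrt (add_nonneg (ha_pos w) (he_pos w))
  have energy : a w w + e w w ≤ s (ftil - π ftil) (w - π w) + e u w := by
    rw [← apply_sub_map_eq_apply_sub_map s π hπ]
    linarith [error_equation a e s b hu huglo w, hb_pos w]
  have hs_bound : s (ftil - π ftil) (w - π w) ≤ √(s ftil ftil) * (C * N) :=
    (apply_le_sqrt_mul_sqrt s hs_pos ⟨hs_symm⟩ _ _).trans <| mul_le_mul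
      (Real.sqrt_le_sqrt (apply_self_sub_map_le_apply_self s hs_pos ⟨hs_symm⟩ π hπ ftil))
      (happrox w) (Real.sqrt_nonneg _) (Real.sqrt_nonneg _)
  have he_bound : e u w ≤ √(e u u) * N :=
    (apply_le_sqrt_mul_sqrt e he_pos ⟨he_symm⟩ u w).trans <| mul_le_mul_of_nonneg_left
      (Real.sqrt_le_sqrt (le_add_of_nonneg_left (ha_pos w))) (Real.sqrt_nonneg _)
  have hsq : N ^ 2 ≤ (C * √(s ftil ftil) + √(e u u)) * N := by linarith
  have hK : 0 ≤ C * √(s ftil ftil) + √(e u u) := by positivity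
  nlinarith [Real.sqrt_nonneg (a w w + e w w)]

/-- abstract form of Theorem 4.3 (global NLMC error bound). -/
theorem stmt6 {X : Type*} [AddCommGroup X] [Module ℝ X]
    (a e s b : LinearMap.BilinForm ℝ X)
    (ha_symm : ∀ x y, a x y = a y x) (ha_pos : ∀ x, 0 ≤ a x x)
    (he_symm : ∀ x y, e x y = e y x) (he_pos : ∀ x, 0 ≤ e x x)
    (hs_symm : ∀ x y, s x y = s y x) (hs_pos : ∀ x, 0 ≤ s x x)
    (hb_pos : ∀ w, 0 ≤ b w w)
    (π : X →ₗ[ℝ] X)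
    (hπ : ∀ x y, s (x - π x) (π y) = 0)
    (C : ℝ) (hC : 0 ≤ C)
    (happrox : ∀ x, Real.sqrt (s (x - π x) (x - π x)) ≤ C * Real.sqrt (a x x + e x x))
    (u uglo ftil : X)
    (hu : ∀ v, b u v + a u v = s ftil v)
    (huglo : ∀ v, b uglo v + a uglo v + e uglo v = s (π ftil) v) :
    Real.sqrt (a (u - uglo) (u - uglo) + e (u - uglo) (u - uglo)) ≤
      C * Real.sqrt (s ftil ftil) + Real.sqrt (e u u) :=
  stmt6_general a e s b ha_pos he_symm he_pos hs_symm hs_pos hb_pos π hπ C hC happrox u uglo ftil hu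
    huglo
end

section
/- Let X be a real vector space, let s : X × X → ℝ be a positive semidefinite symmetric bilinear form with induced seminorm q_s(x) := s(x,x)^{1/2}, and let p : X → ℝ be a nonnegative function such that q_s(v) ≤ C_κ p(v) for all v ∈ X, where C_κ ≥ 0. Let θ ≥ 0, and suppose g, m, y ∈ X satisfy p(g − m)² ≤ s(y, g − m) and q_s(y) ≤ θ (p(m)² + q_s(m)²)^{1/2}. Then p(g − m) ≤ C_κ (1 + C_κ²)^{1/2} θ p(m). (This is the abstract form of the bound on ‖F₁(U_glo) − F₁(U_ms)‖_V established in the proof of Theorem 4.7 of the paper, where p = ‖·‖_V, s is the κ̃-weighted L² inner product, y = F₂(U_glo) − F₂(U_ms), and θ = C^{1/2}((1+Ẽ⁻¹)^{1−M} + (1+E⁻¹)^{1−N_s})^{1/2} H^{−d/2}.) -/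
/-!
Write `a = p(g - m)` and `q = √(s · ·)`. By Cauchy–Schwarz and `q ≤ C_κ p`,
`a² ≤ s(y, g - m) ≤ q(y) q(g - m) ≤ C_κ q(y) a`, hence `a ≤ C_κ q(y)`. Finally
`q(y) ≤ θ √(p(m)² + q(m)²) ≤ θ √(1 + C_κ²) p(m)`, again because `q(m) ≤ C_κ p(m)`.
-/

namespace LinearMap.BilinForm

variable {X : Type*} [AddCommGroup X] [Module ℝ X] (s : LinearMap.BilinForm ℝ X)

lemma apply_le_sqrt_mul_sqrt_s9 (hs_symm : ∀ x y, s x y = s y x) (hs_pos : ∀ x, 0 ≤ s x x)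
    (x y : X) : s x y ≤ √(s x x) * √(s y y) := by
  have hcs : s x y ^ 2 ≤ s x x * s y y := by
    simpa only [sq, hs_symm y x] using s.apply_mul_apply_le_of_forall_zero_le hs_pos x y
  rw [← Real.sqrt_mul (hs_pos x)]
  exact (le_abs_self _).trans (Real.abs_le_sqrt hcs)

lemma le_mul_sqrt_of_sq_le_apply (hs_symm : ∀ x y, s x y = s y x) (hs_pos : ∀ x, 0 ≤ s x x)
    {C a : ℝ} (hC : 0 ≤ C) {x y : X} (ha : a ^ 2 ≤ s y x) (hx : √(s x x) ≤ C * a) :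
    a ≤ C * √(s y y) := by
  rcases le_or_gt a 0 with ha_nonpos | ha_pos
  · exact ha_nonpos.trans (by positivity)
  have key : a * a ≤ C * √(s y y) * a :=
    calc a * a = a ^ 2 := (sq a).symm
      _ ≤ √(s y y) * √(s x x) := ha.trans (s.apply_le_sqrt_mul_sqrt_s9 hs_symm hs_pos y x)
      _ ≤ √(s y y) * (C * a) := by gcongr
      _ = C * √(s y y) * a := by ring
  exact le_of_mul_le_mul_right key ha_pos

end LinearMap.BilinForm

lemma Real.sqrt_sq_add_sq_le_of_le_mul {b c C : ℝ} (hb : 0 ≤ b) (hc : 0 ≤ c) (hcb : c ≤ C * b) :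
    √(b ^ 2 + c ^ 2) ≤ √(1 + C ^ 2) * b := by
  rw [Real.sqrt_le_left (by positivity), mul_pow, Real.sq_sqrt (by positivity)]
  nlinarith

/-- abstract bound on `‖F₁(U_glo) − F₁(U_ms)‖_V` from Theorem 4.7:
if `p(g−m)² ≤ s(y, g−m)` and `q_s(y) ≤ θ (p(m)² + q_s(m)²)^{1/2}` with `q_s ≤ C_κ p`, then
`p(g−m) ≤ C_κ (1 + C_κ²)^{1/2} θ p(m)`. -/
theorem stmt9 {X : Type*} [AddCommGroup X] [Module ℝ X]
    (s : LinearMap.BilinForm ℝ X)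
    (hs_symm : ∀ x y, s x y = s y x) (hs_pos : ∀ x, 0 ≤ s x x)
    (p : X → ℝ) (hp : ∀ x, 0 ≤ p x)
    (Cκ : ℝ) (hCκ : 0 ≤ Cκ)
    (hqp : ∀ v, Real.sqrt (s v v) ≤ Cκ * p v)
    (θ : ℝ) (hθ : 0 ≤ θ)
    (g m y : X)
    (h1 : p (g - m) ^ 2 ≤ s y (g - m))
    (h2 : Real.sqrt (s y y) ≤ θ * Real.sqrt (p m ^ 2 + Real.sqrt (s m m) ^ 2)) :
    p (g - m) ≤ Cκ * Real.sqrt (1 + Cκ ^ 2) * θ * p m := by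
  have hy : √(s y y) ≤ θ * (√(1 + Cκ ^ 2) * p m) :=
    h2.trans <| mul_le_mul_of_nonneg_left
      (Real.sqrt_sq_add_sq_le_of_le_mul (hp m) (Real.sqrt_nonneg _) (hqp m)) hθ
  calc p (g - m) ≤ Cκ * √(s y y) :=
        s.le_mul_sqrt_of_sq_le_apply hs_symm hs_pos hCκ h1 (hqp (g - m))
    _ ≤ Cκ * (θ * (√(1 + Cκ ^ 2) * p m)) := by gcongr
    _ = Cκ * √(1 + Cκ ^ 2) * θ * p m := by ring
end
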